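/- arXiv:2002.10129 — 2 statements merged into one kernel-verified Lean document; each statement's English description precedes it below -/
import Mathlib

section
/- Let n ≥ 1, let U be a proper nonempty open subset of Euclidean space ℝⁿ, and let s be a connected compact subset of U whose Lebesgue (volume) measure is zero. Then for every ε > 0 and every r > 0 there exists a connected open set R with s ⊆ R ⊆ U such that for every point p in the topological boundary of U one has μ(R ∩ B(p,r)) < ε · μ(U ∩ B(p,r)), where μ is Lebesgue measure and B(p,r) is the open ball of center p and radius r. -/
/-!
Take `R` to be a thin open thickening of `s`: it is connected, lies in `U`, and its measure tends
to `μ s = 0`. Only boundary points `p` within distance `r + 1` of `s` see `R` in `B(p, r)`; these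
form a compact subset of `closure U`, on which `p ↦ μ(U ∩ B(p, r))` is bounded below by a
positive constant `c` (cover by finitely many balls of radius `r / 2`). It remains to choose the
thickening so thin that `μ R < ε c`.
-/

open MeasureTheory Filter Topology Metric Set

theorem IsPreconnected.thickening {E : Type*} [SeminormedAddCommGroup E] [NormedSpace ℝ E]
    {s : Set E} (hs : IsPreconnected s) (δ : ℝ) : IsPreconnected (thickening δ s) := by
  rw [← add_ball_zero, ← image2_add, ← image_prod]
  exact (hs.prod (convex_ball 0 δ).isPreconnected).image _ continuous_add.continuousOn

section MeasureOfBalls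

variable {X : Type*} [PseudoMetricSpace X] [MeasurableSpace X]
  {μ : Measure X} [μ.IsOpenPosMeasure] {U K : Set X}

theorem measure_inter_ball_pos_of_mem_closure (hU : IsOpen U) {p : X} (hp : p ∈ closure U)
    {ρ : ℝ} (hρ : 0 < ρ) : 0 < μ (U ∩ ball p ρ) := by
  refine (hU.inter isOpen_ball).measure_pos μ ?_
  rw [inter_comm]
  exact mem_closure_iff.1 hp _ isOpen_ball (mem_ball_self hρ)

theorem IsCompact.exists_pos_le_measure_inter_ball (hK : IsCompact K) (hU : IsOpen U)
    (hKU : K ⊆ closure U) {r : ℝ} (hr : 0 < r) :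
    ∃ c > 0, ∀ p ∈ K, c ≤ μ (U ∩ ball p r) := by
  obtain ⟨t, htK, hcover⟩ :=
    hK.elim_nhds_subcover (fun p => ball p (r / 2)) fun p _ => ball_mem_nhds p (half_pos hr)
  refine ⟨t.inf fun q => μ (U ∩ ball q (r / 2)), ?_, fun p hp => ?_⟩
  · rw [gt_iff_lt, Finset.lt_inf_iff ENNReal.zero_lt_top]
    exact fun q hq => measure_inter_ball_pos_of_mem_closure hU (hKU (htK q hq)) (half_pos hr)
  · obtain ⟨q, hqt, hpq⟩ := mem_iUnion₂.1 (hcover hp)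
    have hball : ball q (r / 2) ⊆ ball p r :=
      ball_subset_ball' (by rw [mem_ball, dist_comm] at hpq; linarith)
    exact (Finset.inf_le hqt).trans (measure_mono (inter_subset_inter_right U hball))

end MeasureOfBalls

theorem IsCompact.eventually_measure_thickening_lt {X : Type*} [MetricSpace X] [ProperSpace X]
    [MeasurableSpace X] [OpensMeasurableSpace X] {μ : Measure X} [IsFiniteMeasureOnCompacts μ]
    {s : Set X} (hs : IsCompact s) {a : ENNReal} (ha : μ s < a) :
    ∀ᶠ δ in 𝓝[>] 0, μ (thickening δ s) < a :=
  ((tendsto_measure_cthickening_of_isCompact hs).mono_left nhdsWithin_le_nhds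
    |>.eventually_lt_const ha).mono fun _ hδ =>
      (measure_mono (thickening_subset_cthickening _ _)).trans_lt hδ

theorem smallremoval_general {n : ℕ}
    (U : Set (EuclideanSpace ℝ (Fin n))) (hUopen : IsOpen U)
    (s : Set (EuclideanSpace ℝ (Fin n))) (hscompact : IsCompact s) (hsconn : IsConnected s)
    (hsU : s ⊆ U) (hs0 : volume s = 0)
    (ε : ℝ) (hε : 0 < ε) (r : ℝ) (hr : 0 < r) :
    ∃ R : Set (EuclideanSpace ℝ (Fin n)), IsOpen R ∧ IsConnected R ∧ s ⊆ R ∧ R ⊆ U ∧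
      ∀ p ∈ frontier U,
        volume (R ∩ Metric.ball p r) < ENNReal.ofReal ε * volume (U ∩ Metric.ball p r) := by
  obtain ⟨c, hc0, hc⟩ := (hscompact.cthickening (r := r + 1)).inter_right isClosed_frontier
    |>.exists_pos_le_measure_inter_ball (μ := volume) hUopen (fun p hp => hp.2.1) hr
  obtain ⟨δ₀, hδ₀, hδ₀U⟩ := hscompact.exists_thickening_subset_open hUopen hsU
  have hεc : volume s < ENNReal.ofReal ε * c := by
    rw [hs0]; exact ENNReal.mul_pos (ENNReal.ofReal_pos.2 hε).ne' hc0.ne'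
  obtain ⟨δ, hsmall, hδ, hδlt⟩ := ((hscompact.eventually_measure_thickening_lt hεc).and
    (Ioo_mem_nhdsGT (lt_min hδ₀ one_pos))).exists
  obtain ⟨hδδ₀, hδ1⟩ := lt_min_iff.1 hδlt
  refine ⟨thickening δ s, isOpen_thickening,
    ⟨hsconn.nonempty.mono (self_subset_thickening hδ s), hsconn.isPreconnected.thickening δ⟩,
    self_subset_thickening hδ s, (thickening_mono hδδ₀.le s).trans hδ₀U,
    fun p hp => ?_⟩
  rcases (thickening δ s ∩ ball p r).eq_empty_or_nonempty with hempty | ⟨x, hxs, hxp⟩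
  · rw [hempty, measure_empty]
    exact ENNReal.mul_pos (ENNReal.ofReal_pos.2 hε).ne'
      (measure_inter_ball_pos_of_mem_closure hUopen hp.1 hr).ne'
  · have hpr : p ∈ thickening r (thickening δ s) :=
      mem_thickening_iff.2 ⟨x, hxs, by rwa [dist_comm, ← mem_ball]⟩
    have hpK : p ∈ cthickening (r + 1) s := thickening_subset_cthickening _ _ <|
      thickening_mono (by linarith) s
        (thickening_thickening_subset r δ s hpr)
    calc volume (thickening δ s ∩ ball p r) ≤ volume (thickening δ s) :=
          measure_mono inter_subset_left
      _ < ENNReal.ofReal ε * c := hsmall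
      _ ≤ ENNReal.ofReal ε * volume (U ∩ ball p r) := by gcongr; exact hc p ⟨hpK, hp⟩

/-- Let `n ≥ 1`, let `U` be a proper nonempty open subset of `ℝⁿ`, and let `s` be a
connected compact subset of `U` of Lebesgue measure zero. Then for every `ε > 0` and `r > 0`
there is a connected open set `R` with `s ⊆ R ⊆ U` such that
`μ(R ∩ B(p,r)) < ε · μ(U ∩ B(p,r))` for every point `p` in the boundary of `U`. -/
theorem smallremoval {n : ℕ} (hn : 1 ≤ n)
    (U : Set (EuclideanSpace ℝ (Fin n))) (hUopen : IsOpen U) (hUne : U.Nonempty)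
    (hUproper : U ≠ Set.univ)
    (s : Set (EuclideanSpace ℝ (Fin n))) (hscompact : IsCompact s) (hsconn : IsConnected s)
    (hsU : s ⊆ U) (hs0 : volume s = 0)
    (ε : ℝ) (hε : 0 < ε) (r : ℝ) (hr : 0 < r) :
    ∃ R : Set (EuclideanSpace ℝ (Fin n)), IsOpen R ∧ IsConnected R ∧ s ⊆ R ∧ R ⊆ U ∧
      ∀ p ∈ frontier U,
        volume (R ∩ Metric.ball p r) < ENNReal.ofReal ε * volume (U ∩ Metric.ball p r) :=
  smallremoval_general U hUopen s hscompact hsconn hsU hs0 ε hε r hr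
end

section
/- For every bounded Lebesgue-measurable subset A of the complex plane ℂ and every δ > 0, there exists a compact set F ⊆ A such that the complement ℂ∖F is connected and m(A∖F) < δ, where m is planar Lebesgue measure. -/
/-!
Take a compact `K ⊆ A` with `m(A \ K) < δ/2`. The grid `G` of vertical and horizontal lines
through rational points is dense, connected (every vertical line meets every horizontal one) and
null, so by outer regularity it lies in an open `U` with `m(U) < δ/2`. Then `F = K \ U` is compact,
`m(A \ F) ≤ m(A \ K) + m(U) < δ`, and `Fᶜ` contains `G`, hence lies between a connected set and its
closure and is itself connected.
-/

open MeasureTheory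

namespace Complex

lemma volume_preimage_re_of_null {s : Set ℝ} (hs : volume s = 0) : volume (re ⁻¹' s) = 0 := by
  have : re ⁻¹' s = measurableEquivRealProd ⁻¹' (s ×ˢ Set.univ) := by ext; simp
  rw [this, volume_preserving_equiv_real_prod.measure_preimage_equiv, Measure.volume_eq_prod,
    Measure.prod_prod, hs, zero_mul]

lemma volume_preimage_im_of_null {t : Set ℝ} (ht : volume t = 0) : volume (im ⁻¹' t) = 0 := by
  have : im ⁻¹' t = measurableEquivRealProd ⁻¹' (Set.univ ×ˢ t) := by ext; simp
  rw [this, volume_preserving_equiv_real_prod.measure_preimage_equiv, Measure.volume_eq_prod,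
    Measure.prod_prod, ht, mul_zero]

lemma isPreconnected_preimage_re_singleton (a : ℝ) : IsPreconnected (re ⁻¹' {a}) :=
  ((convex_singleton a).linear_preimage reLm).isPreconnected

lemma isPreconnected_preimage_im_singleton (b : ℝ) : IsPreconnected (im ⁻¹' {b}) :=
  ((convex_singleton b).linear_preimage imLm).isPreconnected

lemma isPreconnected_preimage_re_union_preimage_im {s t : Set ℝ} (hs : s.Nonempty)
    (ht : t.Nonempty) : IsPreconnected (re ⁻¹' s ∪ im ⁻¹' t) := by
  obtain ⟨a, ha⟩ := hs
  obtain ⟨b, hb⟩ := ht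
  refine isPreconnected_of_forall ⟨a, b⟩ fun z hz => ?_
  rcases hz with hz | hz
  · refine ⟨re ⁻¹' {z.re} ∪ im ⁻¹' {b}, ?_, Or.inr rfl, Or.inl rfl, ?_⟩
    · exact Set.union_subset_union (Set.preimage_mono (Set.singleton_subset_iff.2 hz))
        (Set.preimage_mono (Set.singleton_subset_iff.2 hb))
    · exact (isPreconnected_preimage_re_singleton _).union ⟨z.re, b⟩ rfl rfl
        (isPreconnected_preimage_im_singleton _)
  · refine ⟨re ⁻¹' {a} ∪ im ⁻¹' {z.im}, ?_, Or.inl rfl, Or.inr rfl, ?_⟩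
    · exact Set.union_subset_union (Set.preimage_mono (Set.singleton_subset_iff.2 ha))
        (Set.preimage_mono (Set.singleton_subset_iff.2 hz))
    · exact (isPreconnected_preimage_re_singleton _).union ⟨a, z.im⟩ rfl rfl
        (isPreconnected_preimage_im_singleton _)

def rationalGrid : Set ℂ :=
  re ⁻¹' Set.range ((↑) : ℚ → ℝ) ∪ im ⁻¹' Set.range ((↑) : ℚ → ℝ)

lemma dense_rationalGrid : Dense rationalGrid :=
  (Rat.denseRange_cast.preimage isOpenMap_re).mono Set.subset_union_left

lemma isPreconnected_rationalGrid : IsPreconnected rationalGrid :=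
  isPreconnected_preimage_re_union_preimage_im (Set.range_nonempty _) (Set.range_nonempty _)

lemma volume_rationalGrid : volume rationalGrid = 0 :=
  measure_union_null (volume_preimage_re_of_null ((Set.countable_range _).measure_zero _))
    (volume_preimage_im_of_null ((Set.countable_range _).measure_zero _))

end Complex

/-- for every bounded Lebesgue-measurable subset `A` of `ℂ` and every `δ > 0`
there is a compact set `F ⊆ A` with connected complement such that `m(A \ F) < δ`. -/
theorem compactConnectedComplementApprox (A : Set ℂ) (hAb : Bornology.IsBounded A)
    (hAm : MeasurableSet A) (δ : ℝ) (hδ : 0 < δ) :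
    ∃ F : Set ℂ, IsCompact F ∧ F ⊆ A ∧ IsConnected Fᶜ ∧
      volume (A \ F) < ENNReal.ofReal δ := by
  have hε : ENNReal.ofReal (δ / 2) ≠ 0 := by simpa using hδ
  obtain ⟨K, hKA, hK, hAK⟩ :=
    hAm.exists_isCompact_sdiff_lt (hAb.measure_lt_top (μ := volume)).ne hε
  obtain ⟨U, hGU, hU, hUvol⟩ := Set.exists_isOpen_lt_of_lt Complex.rationalGrid _
    (Complex.volume_rationalGrid ▸ pos_iff_ne_zero.2 hε)
  have hGF : Complex.rationalGrid ⊆ (K \ U)ᶜ := fun z hzG hzF => hzF.2 (hGU hzG)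
  refine ⟨K \ U, hK.diff hU, Set.sdiff_subset.trans hKA,
    ⟨Complex.dense_rationalGrid.nonempty.mono hGF, ?_⟩, ?_⟩
  · exact Complex.isPreconnected_rationalGrid.subset_closure hGF
      (Complex.dense_rationalGrid.closure_eq ▸ Set.subset_univ _)
  · calc volume (A \ (K \ U)) ≤ volume (A \ K ∪ U) := by
          rw [Set.sdiff_sdiff_right]
          exact measure_mono (Set.union_subset_union_right _ Set.inter_subset_right)
      _ ≤ volume (A \ K) + volume U := measure_union_le _ _
      _ < ENNReal.ofReal (δ / 2) + ENNReal.ofReal (δ / 2) := ENNReal.add_lt_add hAK hUvol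
      _ = ENNReal.ofReal δ := by
          rw [← ENNReal.ofReal_add (half_pos hδ).le (half_pos hδ).le, add_halves]
end
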